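/- Pinsker-Marginal bound (Theorem 3.1): if the reward takes values in [0,1], then |Error| ≤ (4/3) · T^{3/2} · D_KL^{tok,max}, where D_KL^{tok,max} = max over steps t and contexts c of D_KL(π_roll(·|c) ‖ π_θ(·|c)) with D_KL(p‖q) = Σ_v p(v) log(p(v)/q(v)). -/

import Mathlib

open Finset

section Setup

variable {X V : Type*}

/-- A policy assigns to each context `(x, y_{<t})` (a prompt together with a token
prefix of length `t`) a strictly positive probability distribution on the next token. -/
structure Policy (X V : Type*) [Fintype V] where
  prob : ∀ t : ℕ, X × (Fin t → V) → V → ℝ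
  pos : ∀ t c v, 0 < prob t c v
  sum_one : ∀ t c, ∑ v, prob t c v = 1

variable [Fintype X] [Fintype V]

/-- Trajectory probability `P^π(y | x) = ∏_t π(y_t | x, y_{<t})`. -/
noncomputable def traj (π : Policy X V) (T : ℕ) (x : X) (y : Fin T → V) : ℝ :=
  ∏ t : Fin T, π.prob t.1 (x, fun s : Fin t.1 => y (Fin.castLE t.isLt.le s)) (y t)

/-- Context visitation mass at prefix length `k`: this is the paper's `d_{k+1}^π`,
a distribution on pairs (prompt, prefix of `k` tokens). -/
noncomputable def visit (π : Policy X V) (P : X → ℝ) (k : ℕ) (c : X × (Fin k → V)) : ℝ :=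
  P c.1 * ∏ s : Fin k, π.prob s.1 (c.1, fun u : Fin s.1 => c.2 (Fin.castLE s.isLt.le u)) (c.2 s)

/-- Total variation distance `½ ∑ |p - q|`. -/
noncomputable def tvDist {α : Type*} [Fintype α] (p q : α → ℝ) : ℝ :=
  (∑ a, |p a - q a|) / 2

/-- KL divergence `∑ p log (p/q)`. -/
noncomputable def klDiv {α : Type*} [Fintype α] (p q : α → ℝ) : ℝ :=
  ∑ a, p a * Real.log (p a / q a)

/-- The objective `J(π) = E_{x∼P} E_{y∼P^π(·|x)}[R(x,y)]`. -/
noncomputable def Jval (P : X → ℝ) (T : ℕ) (R : X → (Fin T → V) → ℝ) (π : Policy X V) : ℝ :=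
  ∑ x, P x * ∑ y : Fin T → V, traj π T x y * R x y

/-- `Q^π(c, v)`: conditional expectation of the reward under continuation by `π`,
given context `c` (of length `k`) and next token `v`. -/
noncomputable def Qval (T : ℕ) (R : X → (Fin T → V) → ℝ) (π : Policy X V)
    (k : ℕ) (hk : k < T) (c : X × (Fin k → V)) (v : V) : ℝ := by
  classical
  exact ∑ y : Fin T → V,
    if (∀ s : Fin k, y (Fin.castLE hk.le s) = c.2 s) ∧ y ⟨k, hk⟩ = v then
      (∏ s : Fin T, if k < s.1 then
          π.prob s.1 (c.1, fun u : Fin s.1 => y (Fin.castLE s.isLt.le u)) (y s)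
        else 1) * R c.1 y
    else 0

/-- `V^π(c) = E_{v ∼ π(·|c)}[Q^π(c, v)]`. -/
noncomputable def Vval (T : ℕ) (R : X → (Fin T → V) → ℝ) (π : Policy X V)
    (k : ℕ) (hk : k < T) (c : X × (Fin k → V)) : ℝ :=
  ∑ v, π.prob k c v * Qval T R π k hk c v

/-- Per-step advantage `A_t(c, v) = Q^{π_roll}(c,v) - V^{π_roll}(c)`. -/
noncomputable def Aval (T : ℕ) (R : X → (Fin T → V) → ℝ) (πroll : Policy X V)
    (k : ℕ) (hk : k < T) (c : X × (Fin k → V)) (v : V) : ℝ :=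
  Qval T R πroll k hk c v - Vval T R πroll k hk c

/-- `g_t(c) = E_{v ∼ π_θ(·|c)}[A_t(c, v)]`. -/
noncomputable def gval (T : ℕ) (R : X → (Fin T → V) → ℝ) (πroll πθ : Policy X V)
    (k : ℕ) (hk : k < T) (c : X × (Fin k → V)) : ℝ :=
  ∑ v, πθ.prob k c v * Aval T R πroll k hk c v

/-- Surrogate objective `L = ∑_{t=1}^T E_{c ∼ d_t^{π_roll}}[g_t(c)]`. -/
noncomputable def surrogate (P : X → ℝ) (T : ℕ) (R : X → (Fin T → V) → ℝ)
    (πroll πθ : Policy X V) : ℝ :=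
  ∑ k : Fin T, ∑ c : X × (Fin k.1 → V), visit πroll P k.1 c * gval T R πroll πθ k.1 k.isLt c

/-- Approximation error `Error = J(π_θ) - J(π_roll) - L`. -/
noncomputable def errVal (P : X → ℝ) (T : ℕ) (R : X → (Fin T → V) → ℝ)
    (πroll πθ : Policy X V) : ℝ :=
  Jval P T R πθ - Jval P T R πroll - surrogate P T R πroll πθ

/-- Sequence-level KL divergence `D_KL^seq = E_{x∼P}[D_KL(P^{π_roll}(·|x) ‖ P^{π_θ}(·|x))]`. -/
noncomputable def seqKL (P : X → ℝ) (T : ℕ) (πroll πθ : Policy X V) : ℝ :=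
  ∑ x, P x * klDiv (fun y : Fin T → V => traj πroll T x y) (fun y => traj πθ T x y)

end Setup


set_option maxHeartbeats 1000000
section Helpers
open scoped Classical
variable {X V : Type*} [Fintype X] [Fintype V]

lemma pw_log (p q : ℝ) (hp : 0 ≤ p) (hq : 0 ≤ q) (hsupp : q = 0 → p = 0) :
    2 * (p - Real.sqrt (p * q)) ≤ p * Real.log (p / q) := by
  rcases eq_or_lt_of_le hp with h | hp0
  · simp [← h]
  · have hq0 : 0 < q := by
      rcases eq_or_lt_of_le hq with h' | h'
      · exact absurd (hsupp h'.symm) (ne_of_gt hp0)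
      · exact h'
    have hx : (0:ℝ) < q / p := div_pos hq0 hp0
    have hlog : Real.log (Real.sqrt (q / p)) ≤ Real.sqrt (q / p) - 1 :=
      Real.log_le_sub_one_of_pos (Real.sqrt_pos.2 hx)
    have h2 : Real.log (p / q) = -2 * Real.log (Real.sqrt (q / p)) := by
      rw [Real.log_sqrt (le_of_lt hx), Real.log_div (ne_of_gt hq0) (ne_of_gt hp0),
        Real.log_div (ne_of_gt hp0) (ne_of_gt hq0)]
      ring
    have h3 : p * Real.sqrt (q / p) = Real.sqrt (p * q) := by
      rw [show p * Real.sqrt (q / p) = Real.sqrt (p^2) * Real.sqrt (q/p) by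
        rw [Real.sqrt_sq hp], ← Real.sqrt_mul (by positivity)]
      congr 1
      field_simp
    calc 2 * (p - Real.sqrt (p * q)) = -2 * p * (Real.sqrt (q/p) - 1) := by
          rw [← h3]; ring
      _ ≤ -2 * p * Real.log (Real.sqrt (q / p)) := by nlinarith
      _ = p * Real.log (p / q) := by rw [h2]; ring

lemma hellinger_le_kl {α : Type*} [Fintype α] (p q : α → ℝ)
    (hp : ∀ a, 0 ≤ p a) (hq : ∀ a, 0 ≤ q a) (hsupp : ∀ a, q a = 0 → p a = 0)
    (hp1 : ∑ a, p a = 1) (hq1 : ∑ a, q a = 1) :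
    ∑ a, (Real.sqrt (p a) - Real.sqrt (q a))^2 ≤ klDiv p q := by
  have key : ∀ a : α, (Real.sqrt (p a) - Real.sqrt (q a))^2 =
      p a + q a - 2 * Real.sqrt (p a * q a) := by
    intro a
    rw [sub_sq, Real.sq_sqrt (hp a), Real.sq_sqrt (hq a), Real.sqrt_mul (hp a)]
    ring
  calc ∑ a, (Real.sqrt (p a) - Real.sqrt (q a))^2
      = ∑ a, (p a + q a - 2 * Real.sqrt (p a * q a)) := by simp_rw [key]
    _ = ∑ a, 2 * (p a - Real.sqrt (p a * q a)) := by
        have e1 : ∑ a, (p a + q a - 2 * Real.sqrt (p a * q a))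
            = 2 - 2 * ∑ a, Real.sqrt (p a * q a) := by
          rw [sum_sub_distrib, sum_add_distrib, hp1, hq1, ← mul_sum]; norm_num
        have e2 : ∑ a, 2 * (p a - Real.sqrt (p a * q a))
            = 2 - 2 * ∑ a, Real.sqrt (p a * q a) := by
          simp_rw [mul_sub]
          rw [sum_sub_distrib, ← mul_sum, ← mul_sum, hp1]; norm_num
        rw [e1, e2]
    _ ≤ ∑ a, p a * Real.log (p a / q a) :=
        sum_le_sum fun a _ => pw_log _ _ (hp a) (hq a) (hsupp a)
    _ = klDiv p q := rfl

lemma klDiv_nonneg {α : Type*} [Fintype α] (p q : α → ℝ)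
    (hp : ∀ a, 0 ≤ p a) (hq : ∀ a, 0 ≤ q a) (hsupp : ∀ a, q a = 0 → p a = 0)
    (hp1 : ∑ a, p a = 1) (hq1 : ∑ a, q a = 1) : 0 ≤ klDiv p q :=
  le_trans (by positivity) (hellinger_le_kl p q hp hq hsupp hp1 hq1)

lemma pinsker' {α : Type*} [Fintype α] (p q : α → ℝ)
    (hp : ∀ a, 0 ≤ p a) (hq : ∀ a, 0 ≤ q a) (hsupp : ∀ a, q a = 0 → p a = 0)
    (hp1 : ∑ a, p a = 1) (hq1 : ∑ a, q a = 1) :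
    ∑ a, |p a - q a| ≤ 2 * Real.sqrt (klDiv p q) := by
  have h1 : ∀ a : α, |p a - q a| =
      |Real.sqrt (p a) - Real.sqrt (q a)| * (Real.sqrt (p a) + Real.sqrt (q a)) := by
    intro a
    rw [← abs_of_nonneg (by positivity : (0:ℝ) ≤ Real.sqrt (p a) + Real.sqrt (q a)),
      ← abs_mul]
    congr 1
    have hpa := Real.sq_sqrt (hp a)
    have hqa := Real.sq_sqrt (hq a)
    linear_combination hqa - hpa
  have cs := Real.sum_mul_le_sqrt_mul_sqrt Finset.univ
    (fun a => |Real.sqrt (p a) - Real.sqrt (q a)|)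
    (fun a => Real.sqrt (p a) + Real.sqrt (q a))
  simp_rw [sq_abs] at cs
  have h2 : ∑ a, (Real.sqrt (p a) + Real.sqrt (q a))^2 ≤ 4 := by
    have : ∀ a : α, (Real.sqrt (p a) + Real.sqrt (q a))^2 ≤ 2 * (p a + q a) := by
      intro a
      have h := sq_nonneg (Real.sqrt (p a) - Real.sqrt (q a))
      rw [sub_sq] at h
      rw [add_sq, Real.sq_sqrt (hp a), Real.sq_sqrt (hq a)] at *
      nlinarith
    calc ∑ a, (Real.sqrt (p a) + Real.sqrt (q a))^2 ≤ ∑ a, 2 * (p a + q a) :=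
          sum_le_sum fun a _ => this a
      _ = 4 := by rw [← mul_sum, sum_add_distrib, hp1, hq1]; norm_num
  calc ∑ a, |p a - q a| = ∑ a, |Real.sqrt (p a) - Real.sqrt (q a)| *
        (Real.sqrt (p a) + Real.sqrt (q a)) := by simp_rw [h1]
    _ ≤ Real.sqrt (∑ a, (Real.sqrt (p a) - Real.sqrt (q a))^2) *
        Real.sqrt (∑ a, (Real.sqrt (p a) + Real.sqrt (q a))^2) := cs
    _ ≤ Real.sqrt (klDiv p q) * Real.sqrt 4 := by
        apply mul_le_mul (Real.sqrt_le_sqrt (hellinger_le_kl p q hp hq hsupp hp1 hq1))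
          (Real.sqrt_le_sqrt h2) (Real.sqrt_nonneg _) (Real.sqrt_nonneg _)
    _ = 2 * Real.sqrt (klDiv p q) := by
        rw [show (4:ℝ) = 2^2 by norm_num, Real.sqrt_sq (by norm_num)]; ring

-- helper: snoc at an index < k
lemma snoc_lt {k : ℕ} (p : Fin k → V) (v : V) (i : Fin (k + 1)) (h : i.1 < k) :
    (Fin.snoc p v : Fin (k+1) → V) i = p ⟨i.1, h⟩ := by
  simp only [Fin.snoc, h, dif_pos]
  rfl

lemma sum_snoc {k : ℕ} (f : (Fin (k + 1) → V) → ℝ) :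
    ∑ y : Fin (k + 1) → V, f y = ∑ p : Fin k → V, ∑ v : V, f (Fin.snoc p v) := by
  rw [← Equiv.sum_comp (Fin.snocEquiv (fun _ => V)) f, Fintype.sum_prod_type,
    Finset.sum_comm]
  rfl

lemma visit_snoc (π : Policy X V) (P : X → ℝ) (k : ℕ) (x : X) (p : Fin k → V) (v : V) :
    visit π P (k + 1) (x, Fin.snoc p v) = visit π P k (x, p) * π.prob k (x, p) v := by
  unfold visit
  simp only
  rw [Fin.prod_univ_castSucc, ← mul_assoc]
  congr 1
  · congr 1
    apply Finset.prod_congr rfl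
    intro s _
    have h1 : (Fin.snoc p v : Fin (k+1) → V) (Fin.castSucc s) = p s := by simp
    have h2 : (fun u : Fin (Fin.castSucc s).1 =>
        (Fin.snoc p v : Fin (k+1) → V) (Fin.castLE (Fin.castSucc s).isLt.le u)) =
        (fun u : Fin s.1 => p (Fin.castLE s.isLt.le u)) := by
      funext u
      rw [snoc_lt p v _ (lt_of_lt_of_le u.isLt s.isLt.le)]
      rfl
    rw [h2, h1]
    rfl
  · have h1 : (Fin.snoc p v : Fin (k+1) → V) (Fin.last k) = v := by simp
    have h2 : (fun u : Fin (Fin.last k).1 =>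
        (Fin.snoc p v : Fin (k+1) → V) (Fin.castLE (Fin.last k).isLt.le u)) = p := by
      funext u
      rw [snoc_lt p v _ u.isLt]
      rfl
    rw [h2, h1]
    rfl

lemma visit_nonneg (π : Policy X V) (P : X → ℝ) (hP : ∀ x, 0 ≤ P x) (k : ℕ)
    (c : X × (Fin k → V)) : 0 ≤ visit π P k c := by
  unfold visit
  apply mul_nonneg (hP c.1)
  exact Finset.prod_nonneg fun s _ => (π.pos _ _ _).le

lemma visit_sum_one (π : Policy X V) (P : X → ℝ) (hP1 : ∑ x, P x = 1) (k : ℕ) :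
    ∑ c : X × (Fin k → V), visit π P k c = 1 := by
  induction k with
  | zero =>
    rw [Fintype.sum_prod_type]
    simpa [visit] using hP1
  | succ k ih =>
    rw [Fintype.sum_prod_type]
    have : ∀ x : X, ∑ y : Fin (k+1) → V, visit π P (k+1) (x, y)
        = ∑ p : Fin k → V, visit π P k (x, p) := by
      intro x
      rw [sum_snoc (fun y => visit π P (k+1) (x, y))]
      apply Finset.sum_congr rfl
      intro p _
      simp_rw [visit_snoc, ← Finset.mul_sum, π.sum_one, mul_one]
    simp_rw [this]
    rw [← Fintype.sum_prod_type]
    exact ih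

lemma visit_pos (π : Policy X V) (P : X → ℝ) (k : ℕ) (c : X × (Fin k → V))
    (hx : 0 < P c.1) : 0 < visit π P k c := by
  unfold visit
  exact mul_pos hx (Finset.prod_pos fun s _ => π.pos _ _ _)

lemma visit_eq_zero (π : Policy X V) (P : X → ℝ) (k : ℕ) (c : X × (Fin k → V))
    (hx : P c.1 = 0) : visit π P k c = 0 := by
  unfold visit; rw [hx, zero_mul]

lemma klDiv_visit_le (πroll πθ : Policy X V) (P : X → ℝ)
    (hP0 : ∀ x, 0 ≤ P x) (hP1 : ∑ x, P x = 1) (Dkl : ℝ) (k : ℕ)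
    (hDkl : ∀ s : ℕ, s < k → ∀ c : X × (Fin s → V),
      klDiv (πroll.prob s c) (πθ.prob s c) ≤ Dkl) :
    klDiv (visit πroll P k) (visit πθ P k) ≤ k * Dkl := by
  induction k with
  | zero =>
    apply le_of_eq
    rw [Nat.cast_zero, zero_mul]
    unfold klDiv
    apply Finset.sum_eq_zero
    intro c _
    rcases eq_or_lt_of_le (hP0 c.1) with h | h
    · rw [visit_eq_zero πroll P 0 c h.symm, zero_mul]
    · have e : visit πroll P 0 c = visit πθ P 0 c := by unfold visit; simp
      rw [e, div_self (ne_of_gt (visit_pos πθ P 0 c h)), Real.log_one, mul_zero]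
  | succ k ih =>
    have ihk := ih (fun s hs c => hDkl s (hs.trans (Nat.lt_succ_self k)) c)
    unfold klDiv
    rw [Fintype.sum_prod_type]
    have key : ∀ x : X, ∑ y : Fin (k+1) → V,
        visit πroll P (k+1) (x, y) *
          Real.log (visit πroll P (k+1) (x, y) / visit πθ P (k+1) (x, y))
        = ∑ p : Fin k → V,
            (visit πroll P k (x, p) *
              Real.log (visit πroll P k (x, p) / visit πθ P k (x, p))
            + visit πroll P k (x, p) *
                klDiv (πroll.prob k (x, p)) (πθ.prob k (x, p))) := by
      intro x
      rw [sum_snoc]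
      apply Finset.sum_congr rfl
      intro p _
      rcases eq_or_lt_of_le (hP0 x) with h | h
      · simp [visit_eq_zero πroll P (k+1) (x, _) h.symm,
          visit_eq_zero πroll P k (x, p) h.symm]
      · have hr : 0 < visit πroll P k (x, p) := visit_pos _ _ _ _ h
        have ht : 0 < visit πθ P k (x, p) := visit_pos _ _ _ _ h
        have step : ∀ v : V,
            visit πroll P (k+1) (x, Fin.snoc p v) *
              Real.log (visit πroll P (k+1) (x, Fin.snoc p v) /
                visit πθ P (k+1) (x, Fin.snoc p v))
            = visit πroll P k (x, p) * πroll.prob k (x, p) v *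
                (Real.log (visit πroll P k (x, p) / visit πθ P k (x, p))
                 + Real.log (πroll.prob k (x, p) v / πθ.prob k (x, p) v)) := by
          intro v
          rw [visit_snoc, visit_snoc]
          congr 1
          rw [show visit πroll P k (x, p) * πroll.prob k (x, p) v /
              (visit πθ P k (x, p) * πθ.prob k (x, p) v)
              = (visit πroll P k (x, p) / visit πθ P k (x, p)) *
                (πroll.prob k (x, p) v / πθ.prob k (x, p) v) by
            rw [div_mul_div_comm]]
          exact Real.log_mul
            (ne_of_gt (div_pos hr ht))
            (ne_of_gt (div_pos (πroll.pos _ _ _) (πθ.pos _ _ _)))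
        simp_rw [step, mul_add]
        rw [Finset.sum_add_distrib]
        congr 1
        · have e : ∀ v : V, visit πroll P k (x, p) * πroll.prob k (x, p) v *
              Real.log (visit πroll P k (x, p) / visit πθ P k (x, p))
              = visit πroll P k (x, p) *
                Real.log (visit πroll P k (x, p) / visit πθ P k (x, p)) *
                πroll.prob k (x, p) v := fun v => by ring
          simp_rw [e]
          rw [← Finset.mul_sum, πroll.sum_one, mul_one]
        · unfold klDiv
          rw [Finset.mul_sum]
          apply Finset.sum_congr rfl
          intro v _
          ring
    simp_rw [key, Finset.sum_add_distrib]
    have h1 : ∑ x : X, ∑ p : Fin k → V,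
        visit πroll P k (x, p) *
          Real.log (visit πroll P k (x, p) / visit πθ P k (x, p))
        = klDiv (visit πroll P k) (visit πθ P k) := by
      unfold klDiv
      rw [Fintype.sum_prod_type]
    have h2 : ∑ x : X, ∑ p : Fin k → V,
        visit πroll P k (x, p) * klDiv (πroll.prob k (x, p)) (πθ.prob k (x, p))
        ≤ ∑ x : X, ∑ p : Fin k → V, visit πroll P k (x, p) * Dkl := by
      apply Finset.sum_le_sum
      intro x _
      apply Finset.sum_le_sum
      intro p _
      exact mul_le_mul_of_nonneg_left (hDkl k (Nat.lt_succ_self k) (x, p))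
        (visit_nonneg πroll P hP0 k (x, p))
    have h3 : ∑ x : X, ∑ p : Fin k → V, visit πroll P k (x, p) * Dkl = Dkl := by
      simp_rw [← Finset.sum_mul]
      rw [← Fintype.sum_prod_type, visit_sum_one πroll P hP1 k, one_mul]
    rw [h1]
    push_cast
    nlinarith [ihk]


lemma sum_cond_prod (π : Policy X V) (x : X) {T : ℕ} :
    ∀ d m, m + d = T → ∀ w : Fin T → V,
    ∑ y : Fin T → V,
      (if (∀ s : Fin T, s.1 < m → y s = w s) then
        ∏ s : Fin T, (if m ≤ s.1 then
          π.prob s.1 (x, fun u : Fin s.1 => y (Fin.castLE s.isLt.le u)) (y s) else 1)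
      else 0) = 1 := by
  intro d
  induction d with
  | zero =>
    intro m hm w
    have hm' : m = T := by omega
    have key : ∀ y : Fin T → V,
        (if (∀ s : Fin T, s.1 < m → y s = w s) then
          ∏ s : Fin T, (if m ≤ s.1 then
            π.prob s.1 (x, fun u : Fin s.1 => y (Fin.castLE s.isLt.le u)) (y s) else 1)
        else 0) = if y = w then 1 else 0 := by
      intro y
      by_cases h : y = w
      · subst h
        rw [if_pos (fun s _ => rfl), if_pos rfl]
        exact Finset.prod_eq_one fun s _ => if_neg (by have := s.isLt; omega)
      · rw [if_neg h, if_neg (fun hc => h (funext fun s => hc s (by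
          have := s.isLt; omega)))]
    simp_rw [key]
    simp
  | succ d ihd =>
    intro m hm w
    have hmT : m < T := by omega
    set s₀ : Fin T := ⟨m, hmT⟩ with hs₀
    have step1 : ∀ y : Fin T → V,
        (if (∀ s : Fin T, s.1 < m → y s = w s) then
          ∏ s : Fin T, (if m ≤ s.1 then
            π.prob s.1 (x, fun u : Fin s.1 => y (Fin.castLE s.isLt.le u)) (y s) else 1)
        else 0)
        = ∑ v : V, (if ((∀ s : Fin T, s.1 < m → y s = w s) ∧ y s₀ = v) then
          ∏ s : Fin T, (if m ≤ s.1 then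
            π.prob s.1 (x, fun u : Fin s.1 => y (Fin.castLE s.isLt.le u)) (y s) else 1)
        else 0) := by
      intro y
      by_cases hC : (∀ s : Fin T, s.1 < m → y s = w s)
      · rw [if_pos hC]
        have hiff : ∀ v : V, (((∀ s : Fin T, s.1 < m → y s = w s) ∧ y s₀ = v))
            ↔ (y s₀ = v) := fun v => and_iff_right hC
        simp_rw [hiff]
        simp
      · rw [if_neg hC]
        symm
        apply Finset.sum_eq_zero
        intro v _
        exact if_neg (fun h => hC h.1)
    simp_rw [step1]
    rw [Finset.sum_comm]
    have step2 : ∀ v : V,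
        (∑ y : Fin T → V, (if ((∀ s : Fin T, s.1 < m → y s = w s) ∧ y s₀ = v) then
          ∏ s : Fin T, (if m ≤ s.1 then
            π.prob s.1 (x, fun u : Fin s.1 => y (Fin.castLE s.isLt.le u)) (y s) else 1)
        else 0))
        = π.prob m (x, fun u : Fin m => w (Fin.castLE hmT.le u)) v := by
      intro v
      set w' : Fin T → V := Function.update w s₀ v with hw'
      have pointwise : ∀ y : Fin T → V,
          (if ((∀ s : Fin T, s.1 < m → y s = w s) ∧ y s₀ = v) then
            ∏ s : Fin T, (if m ≤ s.1 then
              π.prob s.1 (x, fun u : Fin s.1 => y (Fin.castLE s.isLt.le u)) (y s) else 1)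
          else 0)
          = (if (∀ s : Fin T, s.1 < m + 1 → y s = w' s) then
              π.prob m (x, fun u : Fin m => w (Fin.castLE hmT.le u)) v *
              ∏ s : Fin T, (if m + 1 ≤ s.1 then
                π.prob s.1 (x, fun u : Fin s.1 => y (Fin.castLE s.isLt.le u)) (y s) else 1)
            else 0) := by
        intro y
        have hs₀v : (s₀ : Fin T).1 = m := rfl
        have hcond : ((∀ s : Fin T, s.1 < m → y s = w s) ∧ y s₀ = v)
            ↔ (∀ s : Fin T, s.1 < m + 1 → y s = w' s) := by
          constructor
          · rintro ⟨h1, h2⟩ s hs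
            rcases Nat.lt_or_ge s.1 m with h | h
            · rw [h1 s h, hw', Function.update_of_ne]
              intro he
              rw [he, hs₀v] at h
              omega
            · have hse : s = s₀ := Fin.ext (by omega)
              rw [hse, h2, hw', Function.update_self]
          · intro h
            constructor
            · intro s hs
              rw [h s (by omega), hw', Function.update_of_ne]
              intro he
              rw [he, hs₀v] at hs
              omega
            · rw [h s₀ (by omega), hw', Function.update_self]
        by_cases hC : ((∀ s : Fin T, s.1 < m → y s = w s) ∧ y s₀ = v)
        · rw [if_pos hC, if_pos (hcond.mp hC)]
          rw [← Finset.mul_prod_erase Finset.univ _ (Finset.mem_univ s₀),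
            ← Finset.mul_prod_erase Finset.univ
              (fun s : Fin T => (if m + 1 ≤ s.1 then
                π.prob s.1 (x, fun u : Fin s.1 => y (Fin.castLE s.isLt.le u)) (y s) else 1))
              (Finset.mem_univ s₀)]
          rw [if_neg (by omega : ¬ m + 1 ≤ (s₀ : Fin T).1), one_mul,
            if_pos (by omega : m ≤ (s₀ : Fin T).1)]
          congr 1
          · have hctx : (fun u : Fin (s₀ : Fin T).1 => y (Fin.castLE (s₀ : Fin T).isLt.le u))
                = (fun u : Fin m => w (Fin.castLE hmT.le u)) := by
              funext u
              exact hC.1 _ u.isLt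
            rw [hC.2]
            rw [show π.prob (s₀ : Fin T).1
                (x, fun u : Fin (s₀ : Fin T).1 => y (Fin.castLE (s₀ : Fin T).isLt.le u)) v
              = π.prob m (x, fun u : Fin m => w (Fin.castLE hmT.le u)) v by rw [hctx]]
          · apply Finset.prod_congr rfl
            intro s hs
            have hne : s.1 ≠ m := by
              intro h
              exact (Finset.mem_erase.mp hs).1 (Fin.ext h)
            by_cases h : m + 1 ≤ s.1
            · rw [if_pos h, if_pos (by omega)]
            · rw [if_neg h, if_neg (by omega)]
        · rw [if_neg hC, if_neg (fun h => hC (hcond.mpr h))]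
      simp_rw [pointwise]
      have pull : ∀ y : Fin T → V,
          (if (∀ s : Fin T, s.1 < m + 1 → y s = w' s) then
              π.prob m (x, fun u : Fin m => w (Fin.castLE hmT.le u)) v *
              ∏ s : Fin T, (if m + 1 ≤ s.1 then
                π.prob s.1 (x, fun u : Fin s.1 => y (Fin.castLE s.isLt.le u)) (y s) else 1)
            else 0)
          = π.prob m (x, fun u : Fin m => w (Fin.castLE hmT.le u)) v *
            (if (∀ s : Fin T, s.1 < m + 1 → y s = w' s) then
              ∏ s : Fin T, (if m + 1 ≤ s.1 then
                π.prob s.1 (x, fun u : Fin s.1 => y (Fin.castLE s.isLt.le u)) (y s) else 1)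
            else 0) := by
        intro y
        split <;> simp
      simp_rw [pull, ← Finset.mul_sum]
      rw [ihd (m+1) (by omega) w', mul_one]
    simp_rw [step2]
    exact π.sum_one m _


lemma sum_partition {T k : ℕ} (hk : k < T) (G : (Fin k → V) → V → (Fin T → V) → ℝ) :
    ∑ c2 : Fin k → V, ∑ v : V, ∑ y : Fin T → V,
      (if ((∀ s : Fin k, y (Fin.castLE hk.le s) = c2 s) ∧ y ⟨k, hk⟩ = v) then G c2 v y else 0)
    = ∑ y : Fin T → V, G (fun s => y (Fin.castLE hk.le s)) (y ⟨k, hk⟩) y := by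
  have key : ∀ y : Fin T → V,
      (∑ c2 : Fin k → V, ∑ v : V,
        (if ((∀ s : Fin k, y (Fin.castLE hk.le s) = c2 s) ∧ y ⟨k, hk⟩ = v) then G c2 v y else 0))
      = G (fun s => y (Fin.castLE hk.le s)) (y ⟨k, hk⟩) y := by
    intro y
    rw [Finset.sum_eq_single (fun s : Fin k => y (Fin.castLE hk.le s))]
    · rw [Finset.sum_eq_single (y ⟨k, hk⟩)]
      · rw [if_pos ⟨fun s => rfl, rfl⟩]
      · intro v _ hv
        exact if_neg (fun h => hv h.2.symm)
      · intro h
        exact absurd (Finset.mem_univ _) h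
    · intro c2 _ hc2
      apply Finset.sum_eq_zero
      intro v _
      exact if_neg (fun h => hc2 (funext fun s => (h.1 s).symm))
    · intro h
      exact absurd (Finset.mem_univ _) h
  calc ∑ c2 : Fin k → V, ∑ v : V, ∑ y : Fin T → V,
        (if ((∀ s : Fin k, y (Fin.castLE hk.le s) = c2 s) ∧ y ⟨k, hk⟩ = v) then G c2 v y else 0)
      = ∑ c2 : Fin k → V, ∑ y : Fin T → V, ∑ v : V,
        (if ((∀ s : Fin k, y (Fin.castLE hk.le s) = c2 s) ∧ y ⟨k, hk⟩ = v) then G c2 v y else 0) := by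
        exact Finset.sum_congr rfl fun c2 _ => Finset.sum_comm
    _ = ∑ y : Fin T → V, ∑ c2 : Fin k → V, ∑ v : V,
        (if ((∀ s : Fin k, y (Fin.castLE hk.le s) = c2 s) ∧ y ⟨k, hk⟩ = v) then G c2 v y else 0) :=
        Finset.sum_comm
    _ = ∑ y : Fin T → V, G (fun s => y (Fin.castLE hk.le s)) (y ⟨k, hk⟩) y :=
        Finset.sum_congr rfl fun y _ => key y

lemma Qval_nonneg {T : ℕ} (R : X → (Fin T → V) → ℝ) (hR : ∀ x y, R x y ∈ Set.Icc (0:ℝ) 1)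
    (πroll : Policy X V) (k : ℕ) (hk : k < T) (c : X × (Fin k → V)) (v : V) :
    0 ≤ Qval T R πroll k hk c v := by
  unfold Qval
  apply Finset.sum_nonneg
  intro y _
  split
  · apply mul_nonneg
    · apply Finset.prod_nonneg
      intro s _
      split
      · exact (πroll.pos _ _ _).le
      · exact zero_le_one
    · exact (hR c.1 y).1
  · exact le_refl 0


lemma Qval_le_one {T : ℕ} (R : X → (Fin T → V) → ℝ) (hR : ∀ x y, R x y ∈ Set.Icc (0:ℝ) 1)
    (πroll : Policy X V) (k : ℕ) (hk : k < T) (c : X × (Fin k → V)) (v : V) :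
    Qval T R πroll k hk c v ≤ 1 := by
  classical
  set w : Fin T → V := fun s => if h : s.1 < k then c.2 ⟨s.1, h⟩ else v with hw
  have hcond : ∀ y : Fin T → V,
      ((∀ s : Fin k, y (Fin.castLE hk.le s) = c.2 s) ∧ y ⟨k, hk⟩ = v)
      ↔ (∀ s : Fin T, s.1 < k + 1 → y s = w s) := by
    intro y
    constructor
    · rintro ⟨h1, h2⟩ s hs
      rcases Nat.lt_or_ge s.1 k with h | h
      · calc y s = y (Fin.castLE hk.le ⟨s.1, h⟩) := by congr 1
          _ = c.2 ⟨s.1, h⟩ := h1 _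
          _ = w s := by simp only [hw]; rw [dif_pos h]
      · have hs1 : s.1 = k := by omega
        calc y s = y ⟨k, hk⟩ := by congr 1; exact Fin.ext hs1
          _ = v := h2
          _ = w s := by simp only [hw]; rw [dif_neg (by omega)]
    · intro h
      refine ⟨fun s => ?_, ?_⟩
      · have hlt : (Fin.castLE hk.le s).1 < k + 1 := by
          have := s.isLt
          simp only [Fin.coe_castLE]
          omega
        have h1 := h _ hlt
        rw [h1]
        simp only [hw]
        rw [dif_pos (show (Fin.castLE hk.le s).1 < k by
          simp only [Fin.coe_castLE]; exact s.isLt)]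
        exact congrArg c.2 (Fin.ext rfl)
      · have h2 := h ⟨k, hk⟩ (Nat.lt_succ_self k)
        rw [h2]
        simp only [hw]
        rw [dif_neg (show ¬ ((⟨k, hk⟩ : Fin T) : ℕ) < k from lt_irrefl k)]
  have hprod : ∀ y : Fin T → V,
      (∏ s : Fin T, (if k < s.1 then
          πroll.prob s.1 (c.1, fun u : Fin s.1 => y (Fin.castLE s.isLt.le u)) (y s) else 1))
      = (∏ s : Fin T, (if k + 1 ≤ s.1 then
          πroll.prob s.1 (c.1, fun u : Fin s.1 => y (Fin.castLE s.isLt.le u)) (y s) else 1)) := by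
    intro y
    apply Finset.prod_congr rfl
    intro s _
    by_cases h : k < s.1
    · rw [if_pos h, if_pos (show k + 1 ≤ s.1 from h)]
    · rw [if_neg h, if_neg (show ¬ k + 1 ≤ s.1 from h)]
  have key := sum_cond_prod πroll c.1 (T - (k+1)) (k+1) (by omega) w
  unfold Qval
  calc (∑ y : Fin T → V,
        if (∀ s : Fin k, y (Fin.castLE hk.le s) = c.2 s) ∧ y ⟨k, hk⟩ = v then
          (∏ s : Fin T, if k < s.1 then
              πroll.prob s.1 (c.1, fun u : Fin s.1 => y (Fin.castLE s.isLt.le u)) (y s)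
            else 1) * R c.1 y
        else 0)
      ≤ (∑ y : Fin T → V,
        if (∀ s : Fin T, s.1 < k + 1 → y s = w s) then
          (∏ s : Fin T, if k + 1 ≤ s.1 then
              πroll.prob s.1 (c.1, fun u : Fin s.1 => y (Fin.castLE s.isLt.le u)) (y s)
            else 1)
        else 0) := by
        apply Finset.sum_le_sum
        intro y _
        by_cases hC : ((∀ s : Fin k, y (Fin.castLE hk.le s) = c.2 s) ∧ y ⟨k, hk⟩ = v)
        · rw [if_pos hC, if_pos ((hcond y).mp hC), hprod y]
          have hp : 0 ≤ ∏ s : Fin T, (if k + 1 ≤ s.1 then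
              πroll.prob s.1 (c.1, fun u : Fin s.1 => y (Fin.castLE s.isLt.le u)) (y s) else 1) := by
            apply Finset.prod_nonneg
            intro s _
            split
            · exact (πroll.pos _ _ _).le
            · exact zero_le_one
          calc _ ≤ (∏ s : Fin T, (if k + 1 ≤ s.1 then
                πroll.prob s.1 (c.1, fun u : Fin s.1 => y (Fin.castLE s.isLt.le u)) (y s) else 1))
                * 1 := by
                rw [← hprod y]
                exact mul_le_mul_of_nonneg_left (hR c.1 y).2 (by rw [hprod y]; exact hp)
            _ = _ := mul_one _
        · rw [if_neg hC]
          split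
          · apply Finset.prod_nonneg
            intro s _
            split
            · exact (πroll.pos _ _ _).le
            · exact zero_le_one
          · exact le_refl 0
    _ = 1 := key

lemma gval_eq {T : ℕ} (R : X → (Fin T → V) → ℝ) (πroll πθ : Policy X V)
    (k : ℕ) (hk : k < T) (c : X × (Fin k → V)) :
    gval T R πroll πθ k hk c
    = ∑ v, (πθ.prob k c v - πroll.prob k c v) * Qval T R πroll k hk c v := by
  unfold gval Aval
  rw [show (∑ v, πθ.prob k c v * (Qval T R πroll k hk c v - Vval T R πroll k hk c))
      = (∑ v, πθ.prob k c v * Qval T R πroll k hk c v)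
        - (∑ v, πθ.prob k c v) * Vval T R πroll k hk c by
    rw [Finset.sum_mul, ← Finset.sum_sub_distrib]
    apply Finset.sum_congr rfl
    intros
    ring]
  rw [πθ.sum_one, one_mul]
  unfold Vval
  rw [← Finset.sum_sub_distrib]
  apply Finset.sum_congr rfl
  intros
  ring

lemma abs_gval_le {T : ℕ} (R : X → (Fin T → V) → ℝ) (hR : ∀ x y, R x y ∈ Set.Icc (0:ℝ) 1)
    (πroll πθ : Policy X V) (k : ℕ) (hk : k < T) (c : X × (Fin k → V)) (Dkl : ℝ)
    (hD : klDiv (πroll.prob k c) (πθ.prob k c) ≤ Dkl) :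
    |gval T R πroll πθ k hk c| ≤ Real.sqrt Dkl := by
  rw [gval_eq]
  have hzero : ∑ v, (πθ.prob k c v - πroll.prob k c v) = 0 := by
    rw [Finset.sum_sub_distrib, πθ.sum_one, πroll.sum_one, sub_self]
  have hhalf : ∑ v, (πθ.prob k c v - πroll.prob k c v) * Qval T R πroll k hk c v
      = ∑ v, (πθ.prob k c v - πroll.prob k c v) * (Qval T R πroll k hk c v - 1/2) := by
    simp_rw [mul_sub]
    rw [Finset.sum_sub_distrib, ← Finset.sum_mul, hzero, zero_mul, sub_zero]
  rw [hhalf]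
  have hpin : ∑ v, |πroll.prob k c v - πθ.prob k c v|
      ≤ 2 * Real.sqrt (klDiv (πroll.prob k c) (πθ.prob k c)) :=
    pinsker' _ _ (fun v => (πroll.pos _ _ _).le) (fun v => (πθ.pos _ _ _).le)
      (fun v h => absurd h (ne_of_gt (πθ.pos _ _ _))) (πroll.sum_one _ _) (πθ.sum_one _ _)
  calc |∑ v, (πθ.prob k c v - πroll.prob k c v) * (Qval T R πroll k hk c v - 1/2)|
      ≤ ∑ v, |(πθ.prob k c v - πroll.prob k c v) * (Qval T R πroll k hk c v - 1/2)| :=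
        Finset.abs_sum_le_sum_abs _ _
    _ ≤ ∑ v, |πθ.prob k c v - πroll.prob k c v| * (1/2) := by
        apply Finset.sum_le_sum
        intro v _
        rw [abs_mul]
        apply mul_le_mul_of_nonneg_left _ (abs_nonneg _)
        rw [abs_le]
        constructor
        · have := Qval_nonneg R hR πroll k hk c v
          linarith
        · have := Qval_le_one R hR πroll k hk c v
          linarith
    _ = (1/2) * ∑ v, |πroll.prob k c v - πθ.prob k c v| := by
        rw [← Finset.sum_mul, mul_comm]
        congr 1
        apply Finset.sum_congr rfl
        intros
        rw [abs_sub_comm]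
    _ ≤ (1/2) * (2 * Real.sqrt (klDiv (πroll.prob k c) (πθ.prob k c))) := by
        apply mul_le_mul_of_nonneg_left hpin
        norm_num
    _ = Real.sqrt (klDiv (πroll.prob k c) (πθ.prob k c)) := by ring
    _ ≤ Real.sqrt Dkl := Real.sqrt_le_sqrt hD

noncomputable def hyb (P : X → ℝ) (T : ℕ) (R : X → (Fin T → V) → ℝ)
    (πroll πθ : Policy X V) (k : ℕ) : ℝ :=
  ∑ x, P x * ∑ y : Fin T → V,
    (∏ s : Fin T, (if s.1 < k then
        πθ.prob s.1 (x, fun u : Fin s.1 => y (Fin.castLE s.isLt.le u)) (y s)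
      else πroll.prob s.1 (x, fun u : Fin s.1 => y (Fin.castLE s.isLt.le u)) (y s))) * R x y

lemma hyb_zero (P : X → ℝ) (T : ℕ) (R : X → (Fin T → V) → ℝ) (πroll πθ : Policy X V) :
    hyb P T R πroll πθ 0 = Jval P T R πroll := by
  unfold hyb Jval traj
  simp

lemma hyb_top (P : X → ℝ) (T : ℕ) (R : X → (Fin T → V) → ℝ) (πroll πθ : Policy X V) :
    hyb P T R πroll πθ T = Jval P T R πθ := by
  unfold hyb Jval traj
  apply Finset.sum_congr rfl
  intro x _
  congr 1
  apply Finset.sum_congr rfl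
  intro y _
  congr 1
  apply Finset.prod_congr rfl
  intro s _
  rw [if_pos s.isLt]

lemma prod_split_erase {T k : ℕ} (hk : k < T) (A B : Fin T → ℝ) :
    ∏ s ∈ Finset.univ.erase ⟨k, hk⟩, (if s.1 < k then A s else B s)
    = (∏ s : Fin T, (if s.1 < k then A s else 1)) *
      (∏ s : Fin T, (if k < s.1 then B s else 1)) := by
  symm
  rw [← Finset.prod_mul_distrib,
    ← Finset.mul_prod_erase Finset.univ
      (fun s : Fin T => (if s.1 < k then A s else 1) * (if k < s.1 then B s else 1))
      (Finset.mem_univ ⟨k, hk⟩)]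
  rw [show ((if ((⟨k, hk⟩ : Fin T) : ℕ) < k then A ⟨k, hk⟩ else 1) *
      (if k < ((⟨k, hk⟩ : Fin T) : ℕ) then B ⟨k, hk⟩ else 1)) = 1 by
    rw [if_neg (lt_irrefl k), if_neg (lt_irrefl k), one_mul]]
  rw [one_mul]
  apply Finset.prod_congr rfl
  intro s hs
  have hne : s.1 ≠ k := fun h => (Finset.mem_erase.mp hs).1 (Fin.ext h)
  by_cases h : s.1 < k
  · rw [if_pos h, if_pos h, if_neg (by omega), mul_one]
  · rw [if_neg h, if_neg h, if_pos (by omega), one_mul]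

lemma prod_prefix {T k : ℕ} (hk : k < T) (π : Policy X V) (x : X) (y : Fin T → V) :
    (∏ s : Fin T, (if s.1 < k then
        π.prob s.1 (x, fun u : Fin s.1 => y (Fin.castLE s.isLt.le u)) (y s) else 1))
    = ∏ i : Fin k, π.prob i.1
        (x, fun u : Fin i.1 => (fun s : Fin k => y (Fin.castLE hk.le s)) (Fin.castLE i.isLt.le u))
        ((fun s : Fin k => y (Fin.castLE hk.le s)) i) := by
  rw [← Finset.prod_filter]
  refine Finset.prod_bij'
    (fun (s : Fin T) (hs : s ∈ Finset.univ.filter (fun s : Fin T => s.1 < k)) =>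
      (⟨s.1, (Finset.mem_filter.mp hs).2⟩ : Fin k))
    (fun (i : Fin k) _ => Fin.castLE hk.le i) ?_ ?_ ?_ ?_ ?_
  · exact fun a ha => Finset.mem_univ _
  · intro a ha
    exact Finset.mem_filter.mpr ⟨Finset.mem_univ _, a.isLt⟩
  · exact fun a ha => Fin.ext rfl
  · exact fun a ha => Fin.ext rfl
  · exact fun a ha => rfl

lemma hyb_step (P : X → ℝ) {T : ℕ} (R : X → (Fin T → V) → ℝ) (πroll πθ : Policy X V)
    (k : ℕ) (hk : k < T) :
    hyb P T R πroll πθ (k + 1) - hyb P T R πroll πθ k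
    = ∑ c : X × (Fin k → V), visit πθ P k c * gval T R πroll πθ k hk c := by
  rw [Fintype.sum_prod_type]
  have rhs : ∀ x : X,
      (∑ c2 : Fin k → V, visit πθ P k (x, c2) * gval T R πroll πθ k hk (x, c2))
      = ∑ y : Fin T → V,
          visit πθ P k (x, fun s : Fin k => y (Fin.castLE hk.le s)) *
          ((πθ.prob k (x, fun s : Fin k => y (Fin.castLE hk.le s)) (y ⟨k, hk⟩)
            - πroll.prob k (x, fun s : Fin k => y (Fin.castLE hk.le s)) (y ⟨k, hk⟩)) *
           ((∏ s : Fin T, (if k < s.1 then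
              πroll.prob s.1 (x, fun u : Fin s.1 => y (Fin.castLE s.isLt.le u)) (y s)
             else 1)) * R x y)) := by
    intro x
    rw [← sum_partition hk (fun c2 v y => visit πθ P k (x, c2) *
      ((πθ.prob k (x, c2) v - πroll.prob k (x, c2) v) *
       ((∏ s : Fin T, (if k < s.1 then
          πroll.prob s.1 (x, fun u : Fin s.1 => y (Fin.castLE s.isLt.le u)) (y s)
         else 1)) * R x y)))]
    apply Finset.sum_congr rfl
    intro c2 _
    rw [gval_eq, Finset.mul_sum]
    apply Finset.sum_congr rfl
    intro v _
    unfold Qval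
    rw [Finset.mul_sum, Finset.mul_sum]
    apply Finset.sum_congr rfl
    intro y _
    by_cases hC : ((∀ s : Fin k, y (Fin.castLE hk.le s) = c2 s) ∧ y ⟨k, hk⟩ = v)
    · rw [if_pos hC, if_pos hC]
    · rw [if_neg hC, if_neg hC, mul_zero, mul_zero]
  simp_rw [rhs]
  unfold hyb
  rw [← Finset.sum_sub_distrib]
  apply Finset.sum_congr rfl
  intro x _
  rw [← mul_sub, ← Finset.sum_sub_distrib, Finset.mul_sum]
  apply Finset.sum_congr rfl
  intro y _
  rw [← sub_mul]
  -- pointwise product difference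
  have hdiff :
      (∏ s : Fin T, (if s.1 < k + 1 then
          πθ.prob s.1 (x, fun u : Fin s.1 => y (Fin.castLE s.isLt.le u)) (y s)
        else πroll.prob s.1 (x, fun u : Fin s.1 => y (Fin.castLE s.isLt.le u)) (y s)))
      - (∏ s : Fin T, (if s.1 < k then
          πθ.prob s.1 (x, fun u : Fin s.1 => y (Fin.castLE s.isLt.le u)) (y s)
        else πroll.prob s.1 (x, fun u : Fin s.1 => y (Fin.castLE s.isLt.le u)) (y s)))
      = (πθ.prob k (x, fun s : Fin k => y (Fin.castLE hk.le s)) (y ⟨k, hk⟩)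
          - πroll.prob k (x, fun s : Fin k => y (Fin.castLE hk.le s)) (y ⟨k, hk⟩)) *
        ∏ s ∈ Finset.univ.erase ⟨k, hk⟩, (if s.1 < k then
          πθ.prob s.1 (x, fun u : Fin s.1 => y (Fin.castLE s.isLt.le u)) (y s)
        else πroll.prob s.1 (x, fun u : Fin s.1 => y (Fin.castLE s.isLt.le u)) (y s)) := by
    rw [← Finset.mul_prod_erase Finset.univ
        (fun s : Fin T => (if s.1 < k + 1 then
          πθ.prob s.1 (x, fun u : Fin s.1 => y (Fin.castLE s.isLt.le u)) (y s)
        else πroll.prob s.1 (x, fun u : Fin s.1 => y (Fin.castLE s.isLt.le u)) (y s)))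
        (Finset.mem_univ (⟨k, hk⟩ : Fin T)),
      ← Finset.mul_prod_erase Finset.univ
        (fun s : Fin T => (if s.1 < k then
          πθ.prob s.1 (x, fun u : Fin s.1 => y (Fin.castLE s.isLt.le u)) (y s)
        else πroll.prob s.1 (x, fun u : Fin s.1 => y (Fin.castLE s.isLt.le u)) (y s)))
        (Finset.mem_univ (⟨k, hk⟩ : Fin T))]
    rw [if_pos (show ((⟨k, hk⟩ : Fin T) : ℕ) < k + 1 from Nat.lt_succ_self k),
      if_neg (show ¬ ((⟨k, hk⟩ : Fin T) : ℕ) < k from lt_irrefl k)]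
    have heq : (∏ s ∈ Finset.univ.erase (⟨k, hk⟩ : Fin T), (if s.1 < k + 1 then
          πθ.prob s.1 (x, fun u : Fin s.1 => y (Fin.castLE s.isLt.le u)) (y s)
        else πroll.prob s.1 (x, fun u : Fin s.1 => y (Fin.castLE s.isLt.le u)) (y s)))
        = (∏ s ∈ Finset.univ.erase (⟨k, hk⟩ : Fin T), (if s.1 < k then
          πθ.prob s.1 (x, fun u : Fin s.1 => y (Fin.castLE s.isLt.le u)) (y s)
        else πroll.prob s.1 (x, fun u : Fin s.1 => y (Fin.castLE s.isLt.le u)) (y s))) := by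
      apply Finset.prod_congr rfl
      intro s hs
      have hne : s.1 ≠ k := fun h => (Finset.mem_erase.mp hs).1 (Fin.ext h)
      by_cases h : s.1 < k
      · rw [if_pos (by omega), if_pos h]
      · rw [if_neg (by omega), if_neg h]
    rw [heq, ← sub_mul]
  rw [hdiff, prod_split_erase hk, prod_prefix hk πθ x y]
  have hvisit : visit πθ P k (x, fun s : Fin k => y (Fin.castLE hk.le s))
      = P x * ∏ i : Fin k, πθ.prob i.1
          (x, fun u : Fin i.1 => (fun s : Fin k => y (Fin.castLE hk.le s)) (Fin.castLE i.isLt.le u))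
          ((fun s : Fin k => y (Fin.castLE hk.le s)) i) := rfl
  rw [hvisit]
  ring

lemma sum_sqrt_le' (T : ℕ) : ∑ k ∈ Finset.range T, Real.sqrt k ≤ 2/3 * (T * Real.sqrt T) := by
  induction T with
  | zero => simp
  | succ n ih =>
    rw [Finset.sum_range_succ]
    have ha : Real.sqrt n ^ 2 = n := Real.sq_sqrt (by positivity)
    have hb : Real.sqrt (n+1) ^ 2 = (n:ℝ)+1 := by
      rw [show ((n:ℝ)+1) = ((n+1 : ℕ) : ℝ) by push_cast; ring] at *
      exact Real.sq_sqrt (by positivity)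
    have ha0 : 0 ≤ Real.sqrt n := Real.sqrt_nonneg _
    have hb0 : 0 ≤ Real.sqrt (n+1) := Real.sqrt_nonneg _
    have hab : Real.sqrt n ≤ Real.sqrt (n+1) := Real.sqrt_le_sqrt (by linarith)
    have key : Real.sqrt n ≤ 2/3 * (((n:ℝ)+1) * Real.sqrt (n+1)) - 2/3 * (n * Real.sqrt n) := by
      nlinarith [sq_nonneg (Real.sqrt (n+1) - Real.sqrt n), sq_nonneg (Real.sqrt (n+1) + Real.sqrt n),
        mul_nonneg ha0 hb0, mul_nonneg (mul_nonneg ha0 ha0) hb0, mul_nonneg (mul_nonneg hb0 hb0) ha0]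
    have hc : ((n+1 : ℕ) : ℝ) = (n:ℝ)+1 := by push_cast; ring
    rw [hc]
    linarith

end Helpers

/-- **Pinsker-Marginal bound (Theorem 3.1)**: if the reward takes values in `[0,1]`, then
`|Error| ≤ (4/3) · T^(3/2) · D_KL^tok,max`. Here `Dkl` is (an upper bound on, in particular
the maximum of) the token-level KL divergences `D_KL(π_roll(·|c) ‖ π_θ(·|c))` over all
steps and contexts. -/
theorem pinsker_marginal_bound
    {X V : Type*} [Fintype X] [Fintype V]
    (T : ℕ) (hT : 1 ≤ T)
    (P : X → ℝ) (hP0 : ∀ x, 0 ≤ P x) (hP1 : ∑ x, P x = 1)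
    (R : X → (Fin T → V) → ℝ) (hR : ∀ x y, R x y ∈ Set.Icc (0:ℝ) 1)
    (πroll πθ : Policy X V)
    (Dkl : ℝ)
    (hDkl : ∀ k : ℕ, k < T → ∀ c : X × (Fin k → V),
      klDiv (πroll.prob k c) (πθ.prob k c) ≤ Dkl) :
    |errVal P T R πroll πθ| ≤ (4 / 3) * (T : ℝ) ^ ((3 : ℝ) / 2) * Dkl := by
  classical
  have hX : Nonempty X := by
    by_contra h
    rw [not_nonempty_iff] at h
    rw [Finset.univ_eq_empty, Finset.sum_empty] at hP1
    exact one_ne_zero hP1.symm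
  obtain ⟨x0⟩ := hX
  have hD0 : 0 ≤ Dkl := by
    refine le_trans ?_ (hDkl 0 (by omega) (x0, fun i => i.elim0))
    exact klDiv_nonneg _ _ (fun v => (πroll.pos _ _ _).le) (fun v => (πθ.pos _ _ _).le)
      (fun v hv => absurd hv (ne_of_gt (πθ.pos _ _ _))) (πroll.sum_one _ _) (πθ.sum_one _ _)
  set F : ℕ → ℝ := fun k =>
    if h : k < T then
      ∑ c : X × (Fin k → V), (visit πθ P k c - visit πroll P k c) * gval T R πroll πθ k h c
    else 0 with hF
  have herr : errVal P T R πroll πθ = ∑ k ∈ Finset.range T, F k := by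
    unfold errVal surrogate
    have hJ : Jval P T R πθ - Jval P T R πroll
        = ∑ k ∈ Finset.range T, (hyb P T R πroll πθ (k+1) - hyb P T R πroll πθ k) := by
      rw [Finset.sum_range_sub (f := fun k => hyb P T R πroll πθ k), hyb_top, hyb_zero]
    rw [hJ]
    have hsur : (∑ k : Fin T, ∑ c : X × (Fin k.1 → V),
        visit πroll P k.1 c * gval T R πroll πθ k.1 k.isLt c)
        = ∑ k ∈ Finset.range T, (if h : k < T then
            ∑ c : X × (Fin k → V), visit πroll P k c * gval T R πroll πθ k h c else 0) := by
      rw [← Fin.sum_univ_eq_sum_range (fun k => if h : k < T then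
        ∑ c : X × (Fin k → V), visit πroll P k c * gval T R πroll πθ k h c else 0) T]
      apply Finset.sum_congr rfl
      intro i _
      rw [dif_pos i.isLt]
    rw [hsur, ← Finset.sum_sub_distrib]
    apply Finset.sum_congr rfl
    intro k hk
    have hkT : k < T := Finset.mem_range.mp hk
    rw [hyb_step P R πroll πθ k hkT]
    simp only [hF]
    rw [dif_pos hkT, dif_pos hkT, ← Finset.sum_sub_distrib]
    exact Finset.sum_congr rfl fun c _ => (sub_mul _ _ _).symm
  have hbound : ∀ k, k < T → |F k| ≤ 2 * Real.sqrt k * Dkl := by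
    intro k hkT
    simp only [hF]
    rw [dif_pos hkT]
    have hg : ∀ c : X × (Fin k → V), |gval T R πroll πθ k hkT c| ≤ Real.sqrt Dkl :=
      fun c => abs_gval_le R hR πroll πθ k hkT c Dkl (hDkl k hkT c)
    have hsupp : ∀ c : X × (Fin k → V), visit πθ P k c = 0 → visit πroll P k c = 0 := by
      intro c hq
      rcases eq_or_lt_of_le (hP0 c.1) with h | h
      · exact visit_eq_zero _ _ _ _ h.symm
      · exact absurd hq (ne_of_gt (visit_pos _ _ _ _ h))
    have hpin := pinsker' (visit πroll P k) (visit πθ P k)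
      (visit_nonneg _ _ hP0 k) (visit_nonneg _ _ hP0 k) hsupp
      (visit_sum_one _ _ hP1 k) (visit_sum_one _ _ hP1 k)
    have hkl := klDiv_visit_le πroll πθ P hP0 hP1 Dkl k
      (fun s hs c => hDkl s (hs.trans hkT) c)
    have hk0 : (0:ℝ) ≤ (k:ℝ) := by positivity
    calc |∑ c : X × (Fin k → V), (visit πθ P k c - visit πroll P k c) * gval T R πroll πθ k hkT c|
        ≤ ∑ c : X × (Fin k → V), |(visit πθ P k c - visit πroll P k c) * gval T R πroll πθ k hkT c| :=
          Finset.abs_sum_le_sum_abs _ _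
      _ ≤ ∑ c : X × (Fin k → V), |visit πθ P k c - visit πroll P k c| * Real.sqrt Dkl := by
          apply Finset.sum_le_sum
          intro c _
          rw [abs_mul]
          exact mul_le_mul_of_nonneg_left (hg c) (abs_nonneg _)
      _ = (∑ c : X × (Fin k → V), |visit πroll P k c - visit πθ P k c|) * Real.sqrt Dkl := by
          rw [← Finset.sum_mul]
          congr 1
          exact Finset.sum_congr rfl fun c _ => by rw [abs_sub_comm]
      _ ≤ (2 * Real.sqrt (klDiv (visit πroll P k) (visit πθ P k))) * Real.sqrt Dkl :=
          mul_le_mul_of_nonneg_right hpin (Real.sqrt_nonneg _)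
      _ ≤ (2 * Real.sqrt ((k : ℝ) * Dkl)) * Real.sqrt Dkl := by
          apply mul_le_mul_of_nonneg_right _ (Real.sqrt_nonneg _)
          exact mul_le_mul_of_nonneg_left (Real.sqrt_le_sqrt hkl) (by norm_num)
      _ = 2 * Real.sqrt k * Dkl := by
          rw [Real.sqrt_mul hk0,
            show 2 * (Real.sqrt k * Real.sqrt Dkl) * Real.sqrt Dkl
              = 2 * Real.sqrt k * (Real.sqrt Dkl * Real.sqrt Dkl) by ring,
            Real.mul_self_sqrt hD0]
  have hrpow : (T:ℝ) ^ ((3:ℝ)/2) = T * Real.sqrt T := by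
    have h1 : (0:ℝ) < T := by
      have : (1:ℝ) ≤ T := by exact_mod_cast hT
      linarith
    rw [show (3:ℝ)/2 = 1 + 1/2 by norm_num, Real.rpow_add h1, Real.rpow_one,
      ← Real.sqrt_eq_rpow]
  rw [herr]
  calc |∑ k ∈ Finset.range T, F k| ≤ ∑ k ∈ Finset.range T, |F k| :=
        Finset.abs_sum_le_sum_abs _ _
    _ ≤ ∑ k ∈ Finset.range T, 2 * Real.sqrt k * Dkl := by
        apply Finset.sum_le_sum
        intro k hk
        exact hbound k (Finset.mem_range.mp hk)
    _ = (2 * ∑ k ∈ Finset.range T, Real.sqrt k) * Dkl := by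
        rw [← Finset.sum_mul, ← Finset.mul_sum]
    _ ≤ (2 * (2/3 * (T * Real.sqrt T))) * Dkl := by
        apply mul_le_mul_of_nonneg_right _ hD0
        exact mul_le_mul_of_nonneg_left (sum_sqrt_le' T) (by norm_num)
    _ ≤ (4 / 3) * (T : ℝ) ^ ((3 : ℝ) / 2) * Dkl := by
        rw [hrpow]
        apply mul_le_mul_of_nonneg_right _ hD0
        ring_nf
        exact le_refl _
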